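/- arXiv:math/0304493 — 5 statements merged into one kernel-verified Lean document; each statement's English description precedes it below -/
import Mathlib

section
/- For any smooth compactly supported function ξ on [a,b] and any smooth function y on [a,b], letting w(x) = √(1 + y'(x)²), the second variation of the functional I(y) = ∫ₐᵇ w(x) e^{y(x)} dx at a critical point y in direction ξ equals ∫ₐᵇ (ξ'(x)² / w(x)³) e^{y(x)} dx, which is nonnegative. -/
open intervalIntegral MeasureTheory

set_option maxHeartbeats 1000000 in
/-- Differentiation under the interval integral for a parameter family with
jointly continuous derivative. -/
lemma param_hasDerivAt (a b : ℝ) (f g : ℝ → ℝ → ℝ)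
    (hgc : Continuous fun pr : ℝ × ℝ => g pr.1 pr.2)
    (hfc : ∀ t, Continuous (f t))
    (hd : ∀ t x, HasDerivAt (fun s => f s x) (g t x) t) (t₀ : ℝ) :
    HasDerivAt (fun t => ∫ x in a..b, f t x) (∫ x in a..b, g t₀ x) t₀ := by
  obtain ⟨C, hC⟩ := ((isCompact_Icc (a := t₀ - 1) (b := t₀ + 1)).prod
    (isCompact_uIcc (a := a) (b := b))).exists_bound_of_continuousOn hgc.continuousOn
  have key := intervalIntegral.hasDerivAt_integral_of_dominated_loc_of_deriv_le
    (F := f) (F' := g) (x₀ := t₀) (bound := fun _ => C) (s := Metric.ball t₀ 1) (μ := volume)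
    (Metric.ball_mem_nhds t₀ one_pos)
    (Filter.Eventually.of_forall fun t => (hfc t).aestronglyMeasurable)
    ((hfc t₀).intervalIntegrable a b)
    ((hgc.comp (continuous_const.prodMk continuous_id)).aestronglyMeasurable)
    (Filter.Eventually.of_forall fun x hx t ht => by
      refine hC (t, x) ⟨?_, Set.uIoc_subset_uIcc hx⟩
      rw [Metric.mem_ball, Real.dist_eq, abs_lt] at ht
      exact ⟨by linarith [ht.1], by linarith [ht.2]⟩)
    intervalIntegrable_const
    (Filter.Eventually.of_forall fun x _ t _ => hd t x)
  exact key.2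

lemma step1 (P Q U V t : ℝ) :
    HasDerivAt (fun s : ℝ => Real.sqrt (1 + (P + s * Q) ^ 2) * Real.exp (U + s * V))
      (((P + t * Q) * Q / Real.sqrt (1 + (P + t * Q) ^ 2)
        + Real.sqrt (1 + (P + t * Q) ^ 2) * V) * Real.exp (U + t * V)) t := by
  have hWpos : (0:ℝ) < Real.sqrt (1 + (P + t * Q) ^ 2) := Real.sqrt_pos.mpr (by positivity)
  have hP : HasDerivAt (fun s : ℝ => P + s * Q) Q t := by
    simpa using ((hasDerivAt_id t).mul_const Q).const_add P
  have hZ : HasDerivAt (fun s : ℝ => 1 + (P + s * Q) ^ 2) (2 * (P + t * Q) * Q) t := by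
    have := (hP.pow 2).const_add 1
    refine this.congr_deriv (Eq.symm ?_); ring
  have hW : HasDerivAt (fun s : ℝ => Real.sqrt (1 + (P + s * Q) ^ 2))
      ((P + t * Q) * Q / Real.sqrt (1 + (P + t * Q) ^ 2)) t := by
    have := (Real.hasDerivAt_sqrt (x := 1 + (P + t * Q) ^ 2) (by positivity)).comp t hZ
    refine this.congr_deriv (Eq.symm ?_)
    field_simp
  have hl : HasDerivAt (fun s : ℝ => U + s * V) V t := by
    simpa using ((hasDerivAt_id t).mul_const V).const_add U
  have hE : HasDerivAt (fun s : ℝ => Real.exp (U + s * V)) (V * Real.exp (U + t * V)) t := by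
    have := hl.exp
    convert this using 1; ring
  have := hW.mul hE
  refine this.congr_deriv (Eq.symm ?_); ring

lemma step2 (P Q U V t : ℝ) :
    HasDerivAt (fun s : ℝ => ((P + s * Q) * Q / Real.sqrt (1 + (P + s * Q) ^ 2)
        + Real.sqrt (1 + (P + s * Q) ^ 2) * V) * Real.exp (U + s * V))
      ((Q ^ 2 / (Real.sqrt (1 + (P + t * Q) ^ 2)) ^ 3
        + 2 * ((P + t * Q) * Q / Real.sqrt (1 + (P + t * Q) ^ 2)) * V
        + Real.sqrt (1 + (P + t * Q) ^ 2) * V ^ 2) * Real.exp (U + t * V)) t := by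
  have hWpos : (0:ℝ) < Real.sqrt (1 + (P + t * Q) ^ 2) := Real.sqrt_pos.mpr (by positivity)
  have hsq : Real.sqrt (1 + (P + t * Q) ^ 2) ^ 2 = 1 + (P + t * Q) ^ 2 :=
    Real.sq_sqrt (by positivity)
  have hP : HasDerivAt (fun s : ℝ => P + s * Q) Q t := by
    simpa using ((hasDerivAt_id t).mul_const Q).const_add P
  have hZ : HasDerivAt (fun s : ℝ => 1 + (P + s * Q) ^ 2) (2 * (P + t * Q) * Q) t := by
    have := (hP.pow 2).const_add 1
    refine this.congr_deriv (Eq.symm ?_); ring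
  have hW : HasDerivAt (fun s : ℝ => Real.sqrt (1 + (P + s * Q) ^ 2))
      ((P + t * Q) * Q / Real.sqrt (1 + (P + t * Q) ^ 2)) t := by
    have := (Real.hasDerivAt_sqrt (x := 1 + (P + t * Q) ^ 2) (by positivity)).comp t hZ
    refine this.congr_deriv (Eq.symm ?_)
    field_simp
  have hl : HasDerivAt (fun s : ℝ => U + s * V) V t := by
    simpa using ((hasDerivAt_id t).mul_const V).const_add U
  have hE : HasDerivAt (fun s : ℝ => Real.exp (U + s * V)) (V * Real.exp (U + t * V)) t := by
    have := hl.exp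
    convert this using 1; ring
  have hA : HasDerivAt (fun s : ℝ => (P + s * Q) * Q / Real.sqrt (1 + (P + s * Q) ^ 2))
      (Q ^ 2 / Real.sqrt (1 + (P + t * Q) ^ 2) ^ 3) t := by
    have := (hP.mul_const Q).div hW hWpos.ne'
    refine this.congr_deriv (Eq.symm ?_)
    rw [div_eq_div_iff (by positivity) (by positivity)]
    have e : (P + t * Q) * Q * ((P + t * Q) * Q / Real.sqrt (1 + (P + t * Q) ^ 2))
        * Real.sqrt (1 + (P + t * Q) ^ 2) = (P + t * Q) * Q * ((P + t * Q) * Q) := by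
      rw [mul_assoc, div_mul_cancel₀ _ hWpos.ne']
    linear_combination Real.sqrt (1 + (P + t * Q) ^ 2) ^ 2 * e
      - Q ^ 2 * Real.sqrt (1 + (P + t * Q) ^ 2) ^ 2 * hsq
  have := (hA.add (hW.mul_const V)).mul hE
  refine this.congr_deriv (Eq.symm ?_); simp only [Pi.add_apply]; ring

open intervalIntegral MeasureTheory

/-- Second variation of the weighted length functional
`I(y) = ∫ₐᵇ √(1 + y'^2) e^{y} dx` at a critical point `y`
(i.e. a solution of `-e^{-y} (e^{y} y'/√(1+y'^2))' + √(1+y'^2) = 0`)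
in a direction `ξ ∈ C¹₀[a,b]`: it equals `∫ₐᵇ (ξ')² / w³ · e^{y} dx ≥ 0`
where `w = √(1 + y'^2)`. -/
theorem second_variation_formula (a b : ℝ) (hab : a < b) (y ξ : ℝ → ℝ)
    (hy : ContDiff ℝ (⊤ : ℕ∞) y) (hξ : ContDiff ℝ (⊤ : ℕ∞) ξ)
    (hsupp : ∀ x, x ∉ Set.Ioo a b → ξ x = 0)
    (hEL : ∀ x ∈ Set.Icc a b,
      -Real.exp (-(y x)) *
          deriv (fun s => Real.exp (y s) * deriv y s / Real.sqrt (1 + (deriv y s) ^ 2)) x +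
        Real.sqrt (1 + (deriv y x) ^ 2) = 0) :
    iteratedDeriv 2
        (fun t : ℝ => ∫ x in a..b,
          Real.sqrt (1 + (deriv (fun s => y s + t * ξ s) x) ^ 2) *
            Real.exp (y x + t * ξ x)) 0
      = ∫ x in a..b,
          (deriv ξ x) ^ 2 / (Real.sqrt (1 + (deriv y x) ^ 2)) ^ 3 * Real.exp (y x) ∧
    0 ≤ ∫ x in a..b,
          (deriv ξ x) ^ 2 / (Real.sqrt (1 + (deriv y x) ^ 2)) ^ 3 * Real.exp (y x) := by
  have hy' : Differentiable ℝ y := hy.differentiable (by simp)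
  have hξ' : Differentiable ℝ ξ := hξ.differentiable (by simp)
  have hdy : ContDiff ℝ (⊤ : ℕ∞) (deriv y) := (contDiff_infty_iff_deriv.mp (hy.of_le (by simp))).2
  have hdξ : ContDiff ℝ (⊤ : ℕ∞) (deriv ξ) := (contDiff_infty_iff_deriv.mp (hξ.of_le (by simp))).2
  have hξa : ξ a = 0 := hsupp a (by simp)
  have hξb : ξ b = 0 := hsupp b (by simp)
  have hw0pos : ∀ x, (0:ℝ) < Real.sqrt (1 + (deriv y x) ^ 2) :=
    fun x => Real.sqrt_pos.mpr (by positivity)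
  -- nonnegativity
  have hnonneg : 0 ≤ ∫ x in a..b,
      (deriv ξ x) ^ 2 / (Real.sqrt (1 + (deriv y x) ^ 2)) ^ 3 * Real.exp (y x) :=
    intervalIntegral.integral_nonneg hab.le (fun x _ => by positivity)
  refine ⟨?_, hnonneg⟩
  -- the three integrands
  set F : ℝ → ℝ → ℝ := fun t x =>
    Real.sqrt (1 + (deriv y x + t * deriv ξ x) ^ 2) * Real.exp (y x + t * ξ x) with hF
  set G : ℝ → ℝ → ℝ := fun t x =>
    ((deriv y x + t * deriv ξ x) * deriv ξ x / Real.sqrt (1 + (deriv y x + t * deriv ξ x) ^ 2)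
      + Real.sqrt (1 + (deriv y x + t * deriv ξ x) ^ 2) * ξ x) * Real.exp (y x + t * ξ x) with hG
  set H : ℝ → ℝ → ℝ := fun t x =>
    ((deriv ξ x) ^ 2 / (Real.sqrt (1 + (deriv y x + t * deriv ξ x) ^ 2)) ^ 3
      + 2 * ((deriv y x + t * deriv ξ x) * deriv ξ x /
          Real.sqrt (1 + (deriv y x + t * deriv ξ x) ^ 2)) * ξ x
      + Real.sqrt (1 + (deriv y x + t * deriv ξ x) ^ 2) * (ξ x) ^ 2) *
        Real.exp (y x + t * ξ x) with hH
  -- joint continuity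
  have hPc : Continuous fun pr : ℝ × ℝ => deriv y pr.2 + pr.1 * deriv ξ pr.2 :=
    (hdy.continuous.comp continuous_snd).add
      (continuous_fst.mul (hdξ.continuous.comp continuous_snd))
  have hWc : Continuous fun pr : ℝ × ℝ =>
      Real.sqrt (1 + (deriv y pr.2 + pr.1 * deriv ξ pr.2) ^ 2) :=
    Real.continuous_sqrt.comp (continuous_const.add (hPc.pow 2))
  have hWne : ∀ pr : ℝ × ℝ,
      Real.sqrt (1 + (deriv y pr.2 + pr.1 * deriv ξ pr.2) ^ 2) ≠ 0 :=
    fun pr => (Real.sqrt_pos.mpr (by positivity)).ne'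
  have hEc : Continuous fun pr : ℝ × ℝ => Real.exp (y pr.2 + pr.1 * ξ pr.2) :=
    Real.continuous_exp.comp ((hy.continuous.comp continuous_snd).add
      (continuous_fst.mul (hξ.continuous.comp continuous_snd)))
  have hqc : Continuous fun pr : ℝ × ℝ => deriv ξ pr.2 := hdξ.continuous.comp continuous_snd
  have hvc : Continuous fun pr : ℝ × ℝ => ξ pr.2 := hξ.continuous.comp continuous_snd
  have hFc : Continuous fun pr : ℝ × ℝ => F pr.1 pr.2 := hWc.mul hEc
  have hGc : Continuous fun pr : ℝ × ℝ => G pr.1 pr.2 :=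
    (((hPc.mul hqc).div hWc hWne).add (hWc.mul hvc)).mul hEc
  have hHc : Continuous fun pr : ℝ × ℝ => H pr.1 pr.2 := by
    refine Continuous.mul ?_ hEc
    refine Continuous.add (Continuous.add ?_ ?_) ?_
    · exact (hqc.pow 2).div (hWc.pow 3) (fun pr => pow_ne_zero 3 (hWne pr))
    · exact (continuous_const.mul ((hPc.mul hqc).div hWc hWne)).mul hvc
    · exact hWc.mul (hvc.pow 2)
  -- slice continuity
  have cP : ∀ t : ℝ, Continuous fun x => deriv y x + t * deriv ξ x :=
    fun t => hdy.continuous.add (continuous_const.mul hdξ.continuous)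
  have cW : ∀ t : ℝ, Continuous fun x => Real.sqrt (1 + (deriv y x + t * deriv ξ x) ^ 2) :=
    fun t => Real.continuous_sqrt.comp (continuous_const.add ((cP t).pow 2))
  have cWne : ∀ t x : ℝ, Real.sqrt (1 + (deriv y x + t * deriv ξ x) ^ 2) ≠ 0 :=
    fun t x => (Real.sqrt_pos.mpr (by positivity)).ne'
  have cE : ∀ t : ℝ, Continuous fun x => Real.exp (y x + t * ξ x) :=
    fun t => Real.continuous_exp.comp (hy.continuous.add (continuous_const.mul hξ.continuous))
  have hFt : ∀ t, Continuous (F t) := fun t => (cW t).mul (cE t)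
  have hGt : ∀ t, Continuous (G t) := fun t =>
    ((((cP t).mul hdξ.continuous).div (cW t) (cWne t)).add ((cW t).mul hξ.continuous)).mul (cE t)
  -- first and second derivative under the integral sign
  have hD1 : ∀ t₀ : ℝ, HasDerivAt (fun t => ∫ x in a..b, F t x) (∫ x in a..b, G t₀ x) t₀ :=
    fun t₀ => param_hasDerivAt a b F G hGc hFt
      (fun t x => step1 (deriv y x) (deriv ξ x) (y x) (ξ x) t) t₀
  have hD2 : HasDerivAt (fun t => ∫ x in a..b, G t x) (∫ x in a..b, H 0 x) 0 :=
    param_hasDerivAt a b G H hHc hGt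
      (fun t x => step2 (deriv y x) (deriv ξ x) (y x) (ξ x) t) 0
  -- rewrite the inner deriv
  have hrw : (fun t : ℝ => ∫ x in a..b,
        Real.sqrt (1 + (deriv (fun s => y s + t * ξ s) x) ^ 2) * Real.exp (y x + t * ξ x))
      = fun t => ∫ x in a..b, F t x := by
    funext t
    have hfun : (fun x => Real.sqrt (1 + (deriv (fun s => y s + t * ξ s) x) ^ 2) *
        Real.exp (y x + t * ξ x)) = fun x => F t x := by
      funext x
      have hdd : deriv (fun s => y s + t * ξ s) x = deriv y x + t * deriv ξ x :=
        ((hy' x).hasDerivAt.add ((hξ' x).hasDerivAt.const_mul t)).deriv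
      rw [hdd]
    rw [hfun]
  rw [hrw, iteratedDeriv_succ, iteratedDeriv_one]
  have hd1 : deriv (fun t => ∫ x in a..b, F t x) = fun t => ∫ x in a..b, G t x :=
    funext fun t₀ => (hD1 t₀).deriv
  rw [hd1, hD2.deriv]
  -- now reduce ∫ H 0 x to the target via the Euler–Lagrange equation
  set u₀ : ℝ → ℝ := fun s => Real.exp (y s) * deriv y s / Real.sqrt (1 + (deriv y s) ^ 2)
    with hu₀def
  have hu₀ : ContDiff ℝ (⊤ : ℕ∞) u₀ := by
    refine ContDiff.div ?_ ?_ ?_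
    · exact (Real.contDiff_exp.comp (hy.of_le (by simp))).mul hdy
    · exact (contDiff_const.add (hdy.pow 2)).sqrt
        (fun x => by positivity)
    · exact fun x => (hw0pos x).ne'
  set φ : ℝ → ℝ := fun x => u₀ x * ξ x ^ 2 with hφdef
  have hφ : ContDiff ℝ (⊤ : ℕ∞) φ := hu₀.mul ((hξ.of_le (by simp)).pow 2)
  have hφat : ∀ x, HasDerivAt φ
      (deriv u₀ x * ξ x ^ 2 + u₀ x * (↑2 * ξ x ^ 1 * deriv ξ x)) x :=
    fun x => ((hu₀.differentiable (by simp) x).hasDerivAt.mul ((hξ' x).hasDerivAt.pow 2))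
  have hEL' : ∀ x ∈ Set.Icc a b,
      deriv u₀ x = Real.exp (y x) * Real.sqrt (1 + (deriv y x) ^ 2) := by
    intro x hx
    have h := hEL x hx
    have h2 : Real.exp (-(y x)) * deriv u₀ x = Real.sqrt (1 + (deriv y x) ^ 2) := by
      rw [hu₀def]; linarith
    calc deriv u₀ x = Real.exp (y x) * (Real.exp (-(y x)) * deriv u₀ x) := by
          rw [← mul_assoc, ← Real.exp_add]; simp
      _ = _ := by rw [h2]
  have key : (∫ x in a..b, H 0 x)
      = ∫ x in a..b, ((deriv ξ x) ^ 2 / (Real.sqrt (1 + (deriv y x) ^ 2)) ^ 3 *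
          Real.exp (y x) + deriv φ x) := by
    refine intervalIntegral.integral_congr ?_
    intro x hx
    rw [Set.uIcc_of_le hab.le] at hx
    show H 0 x = deriv ξ x ^ 2 / Real.sqrt (1 + deriv y x ^ 2) ^ 3 * Real.exp (y x) + deriv φ x
    rw [(hφat x).deriv, hEL' x hx, hH]
    simp only [zero_mul, add_zero, mul_zero]
    ring
  have hint1 : IntervalIntegrable (fun x =>
      (deriv ξ x) ^ 2 / (Real.sqrt (1 + (deriv y x) ^ 2)) ^ 3 * Real.exp (y x)) volume a b := by
    apply Continuous.intervalIntegrable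
    refine Continuous.mul ?_ (Real.continuous_exp.comp hy.continuous)
    refine (hdξ.continuous.pow 2).div
      ((Real.continuous_sqrt.comp (continuous_const.add (hdy.continuous.pow 2))).pow 3) ?_
    exact fun x => pow_ne_zero 3 (hw0pos x).ne'
  have hφdc : Continuous (deriv φ) := (contDiff_infty_iff_deriv.mp hφ).2.continuous
  have hint2 : IntervalIntegrable (deriv φ) volume a b := hφdc.intervalIntegrable a b
  rw [key, intervalIntegral.integral_add hint1 hint2]
  have hsub : (∫ x in a..b, deriv φ x) = φ b - φ a :=
    intervalIntegral.integral_deriv_eq_sub (fun x _ => hφ.differentiable (by simp) x) hint2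
  rw [hsub, hφdef]
  simp [hξa, hξb]
end

section
/- Every critical point of the weighted length functional I(y) = ∫ₐᵇ √(1+y'²) e^{y} dx is stable: for every ξ ∈ C¹₀[a,b], the second variation δ²I(y)(ξ,ξ) ≥ 0. -/
open intervalIntegral Metric
open scoped ContDiff


noncomputable def cpsF (Y Ξ P Q : ℝ → ℝ) (t x : ℝ) : ℝ :=
  Real.sqrt (1 + (P x + t * Q x) ^ 2) * Real.exp (Y x + t * Ξ x)

noncomputable def cpsF1 (Y Ξ P Q : ℝ → ℝ) (t x : ℝ) : ℝ :=
  Real.exp (Y x + t * Ξ x) *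
    (Q x * (P x + t * Q x) / Real.sqrt (1 + (P x + t * Q x) ^ 2) +
      Real.sqrt (1 + (P x + t * Q x) ^ 2) * Ξ x)

noncomputable def cpsF2 (Y Ξ P Q : ℝ → ℝ) (t x : ℝ) : ℝ :=
  Real.exp (Y x + t * Ξ x) *
    ((Q x) ^ 2 / Real.sqrt (1 + (P x + t * Q x) ^ 2) ^ 3 +
      2 * Q x * (P x + t * Q x) * Ξ x / Real.sqrt (1 + (P x + t * Q x) ^ 2) +
      Real.sqrt (1 + (P x + t * Q x) ^ 2) * (Ξ x) ^ 2)

lemma cps_sqrt_pos (r : ℝ) : 0 < Real.sqrt (1 + r ^ 2) :=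
  Real.sqrt_pos.mpr (by positivity)

lemma cps_sq_sqrt (r : ℝ) : Real.sqrt (1 + r ^ 2) ^ 2 = 1 + r ^ 2 :=
  Real.sq_sqrt (by positivity)

lemma cps_hderiv1 (Y Ξ P Q : ℝ → ℝ) (t x : ℝ) :
    HasDerivAt (fun t => cpsF Y Ξ P Q t x) (cpsF1 Y Ξ P Q t x) t := by
  have hr : HasDerivAt (fun t : ℝ => P x + t * Q x) (Q x) t :=
    (hasDerivAt_mul_const (Q x)).const_add (P x)
  have hu : HasDerivAt (fun t : ℝ => 1 + (P x + t * Q x) ^ 2)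
      (2 * (P x + t * Q x) ^ 1 * Q x) t := (hr.pow 2).const_add 1
  have hS : HasDerivAt (fun t : ℝ => Real.sqrt (1 + (P x + t * Q x) ^ 2))
      (2 * (P x + t * Q x) ^ 1 * Q x / (2 * Real.sqrt (1 + (P x + t * Q x) ^ 2))) t :=
    hu.sqrt (by positivity)
  have he : HasDerivAt (fun t : ℝ => Real.exp (Y x + t * Ξ x))
      (Real.exp (Y x + t * Ξ x) * Ξ x) t :=
    ((hasDerivAt_mul_const (Ξ x)).const_add (Y x)).exp
  have h := hS.mul he
  refine h.congr_deriv (Eq.symm ?_)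
  have h0 := (cps_sqrt_pos (P x + t * Q x)).ne'
  have h2 := cps_sq_sqrt (P x + t * Q x)
  unfold cpsF1
  field_simp

lemma cps_hderiv2 (Y Ξ P Q : ℝ → ℝ) (t x : ℝ) :
    HasDerivAt (fun t => cpsF1 Y Ξ P Q t x) (cpsF2 Y Ξ P Q t x) t := by
  have h0 := (cps_sqrt_pos (P x + t * Q x)).ne'
  have hr : HasDerivAt (fun t : ℝ => P x + t * Q x) (Q x) t :=
    (hasDerivAt_mul_const (Q x)).const_add (P x)
  have hu : HasDerivAt (fun t : ℝ => 1 + (P x + t * Q x) ^ 2)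
      (2 * (P x + t * Q x) ^ 1 * Q x) t := (hr.pow 2).const_add 1
  have hS : HasDerivAt (fun t : ℝ => Real.sqrt (1 + (P x + t * Q x) ^ 2))
      (2 * (P x + t * Q x) ^ 1 * Q x / (2 * Real.sqrt (1 + (P x + t * Q x) ^ 2))) t :=
    hu.sqrt (by positivity)
  have he : HasDerivAt (fun t : ℝ => Real.exp (Y x + t * Ξ x))
      (Real.exp (Y x + t * Ξ x) * Ξ x) t :=
    ((hasDerivAt_mul_const (Ξ x)).const_add (Y x)).exp
  have hnum : HasDerivAt (fun t : ℝ => Q x * (P x + t * Q x)) (Q x * Q x) t :=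
    hr.const_mul (Q x)
  have hdiv := hnum.div hS h0
  have hmul := hS.mul_const (Ξ x)
  have h := he.mul (hdiv.add hmul)
  refine h.congr_deriv (Eq.symm ?_)
  unfold cpsF2
  have h2 := cps_sq_sqrt (P x + t * Q x)
  set s := Real.sqrt (1 + (P x + t * Q x) ^ 2) with hs
  simp only [Pi.add_apply, Pi.div_apply]
  rw [← hs]
  field_simp
  linear_combination (-Q x ^ 2) * h2

section
variable {Y Ξ P Q : ℝ → ℝ}

lemma cps_cont_aux (hP : Continuous P) (hQ : Continuous Q) :
    Continuous (fun p : ℝ × ℝ => P p.2 + p.1 * Q p.2) :=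
  (hP.comp continuous_snd).add (continuous_fst.mul (hQ.comp continuous_snd))

lemma cps_cont_S (hP : Continuous P) (hQ : Continuous Q) :
    Continuous (fun p : ℝ × ℝ => Real.sqrt (1 + (P p.2 + p.1 * Q p.2) ^ 2)) :=
  Real.continuous_sqrt.comp (continuous_const.add ((cps_cont_aux hP hQ).pow 2))

lemma cps_S_ne (r : ℝ) : Real.sqrt (1 + r ^ 2) ≠ 0 :=
  (Real.sqrt_pos.mpr (by positivity)).ne'

lemma cps_cont_exp (hY : Continuous Y) (hΞ : Continuous Ξ) :
    Continuous (fun p : ℝ × ℝ => Real.exp (Y p.2 + p.1 * Ξ p.2)) :=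
  Real.continuous_exp.comp (cps_cont_aux hY hΞ)

lemma cps_cont_G1 (hY : Continuous Y) (hΞ : Continuous Ξ) (hP : Continuous P)
    (hQ : Continuous Q) :
    Continuous (fun p : ℝ × ℝ =>
      Real.exp (Y p.2 + p.1 * Ξ p.2) *
        (Q p.2 * (P p.2 + p.1 * Q p.2) / Real.sqrt (1 + (P p.2 + p.1 * Q p.2) ^ 2) +
          Real.sqrt (1 + (P p.2 + p.1 * Q p.2) ^ 2) * Ξ p.2)) := by
  refine (cps_cont_exp hY hΞ).mul (Continuous.add ?_ ?_)
  · exact ((hQ.comp continuous_snd).mul (cps_cont_aux hP hQ)).div (cps_cont_S hP hQ)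
      (fun p => cps_S_ne _)
  · exact (cps_cont_S hP hQ).mul (hΞ.comp continuous_snd)

lemma cps_cont_G2 (hY : Continuous Y) (hΞ : Continuous Ξ) (hP : Continuous P)
    (hQ : Continuous Q) :
    Continuous (fun p : ℝ × ℝ =>
      Real.exp (Y p.2 + p.1 * Ξ p.2) *
        ((Q p.2) ^ 2 / Real.sqrt (1 + (P p.2 + p.1 * Q p.2) ^ 2) ^ 3 +
          2 * Q p.2 * (P p.2 + p.1 * Q p.2) * Ξ p.2 /
            Real.sqrt (1 + (P p.2 + p.1 * Q p.2) ^ 2) +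
          Real.sqrt (1 + (P p.2 + p.1 * Q p.2) ^ 2) * (Ξ p.2) ^ 2)) := by
  refine (cps_cont_exp hY hΞ).mul (Continuous.add (Continuous.add ?_ ?_) ?_)
  · exact ((hQ.comp continuous_snd).pow 2).div ((cps_cont_S hP hQ).pow 3)
      (fun p => pow_ne_zero _ (cps_S_ne _))
  · exact (((continuous_const.mul (hQ.comp continuous_snd)).mul
      (cps_cont_aux hP hQ)).mul (hΞ.comp continuous_snd)).div (cps_cont_S hP hQ)
      (fun p => cps_S_ne _)
  · exact (cps_cont_S hP hQ).mul ((hΞ.comp continuous_snd).pow 2)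

end

/-- differentiation under the interval integral for jointly continuous data -/
lemma cps_deriv_integral {a b : ℝ} {G G' : ℝ → ℝ → ℝ}
    (hG : Continuous fun p : ℝ × ℝ => G p.1 p.2)
    (hG' : Continuous fun p : ℝ × ℝ => G' p.1 p.2)
    (hd : ∀ t x, HasDerivAt (fun t => G t x) (G' t x) t) (t₀ : ℝ) :
    HasDerivAt (fun t => ∫ x in a..b, G t x) (∫ x in a..b, G' t₀ x) t₀ := by
  have hK : IsCompact (Set.Icc (t₀ - 1) (t₀ + 1) ×ˢ Set.uIcc a b) :=
    isCompact_Icc.prod isCompact_uIcc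
  obtain ⟨C, hC⟩ := hK.exists_bound_of_continuousOn hG'.continuousOn
  refine (intervalIntegral.hasDerivAt_integral_of_dominated_loc_of_deriv_le
    (F := G) (F' := G') (bound := fun _ => C) (Metric.ball_mem_nhds t₀ one_pos) ?_ ?_ ?_ ?_ ?_ ?_).2
  · exact Filter.Eventually.of_forall fun t =>
      (hG.comp (Continuous.prodMk_right t)).aestronglyMeasurable
  · exact (hG.comp (Continuous.prodMk_right t₀)).intervalIntegrable a b
  · exact (hG'.comp (Continuous.prodMk_right t₀)).aestronglyMeasurable
  · refine Filter.Eventually.of_forall fun x hx t ht => ?_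
    refine hC (t, x) ⟨?_, Set.uIoc_subset_uIcc hx⟩
    have h1 : |t - t₀| < 1 := by simpa [Real.dist_eq] using ht
    obtain ⟨h2, h3⟩ := abs_sub_lt_iff.mp h1
    exact ⟨by simpa using by linarith, by simpa using by linarith⟩
  · exact intervalIntegrable_const
  · exact Filter.Eventually.of_forall fun x _ t _ => hd t x

/-- Every critical point of the weighted length functional
`I(y) = ∫ₐᵇ √(1 + y'^2) e^{y} dx` is stable: the second variation
`(d²/dt²) I(y + tξ)|_{t=0}` is nonnegative for every `ξ ∈ C¹₀[a,b]`. -/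
theorem critical_points_are_stable (a b : ℝ) (hab : a < b) (y ξ : ℝ → ℝ)
    (hy : ContDiff ℝ (⊤ : ℕ∞) y) (hξ : ContDiff ℝ (⊤ : ℕ∞) ξ)
    (hsupp : ∀ x, x ∉ Set.Ioo a b → ξ x = 0)
    (hEL : ∀ x ∈ Set.Icc a b,
      -Real.exp (-(y x)) *
          deriv (fun s => Real.exp (y s) * deriv y s / Real.sqrt (1 + (deriv y s) ^ 2)) x +
        Real.sqrt (1 + (deriv y x) ^ 2) = 0) :
    0 ≤ iteratedDeriv 2
        (fun t : ℝ => ∫ x in a..b,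
          Real.sqrt (1 + (deriv (fun s => y s + t * ξ s) x) ^ 2) *
            Real.exp (y x + t * ξ x)) 0 := by
  have hyd : Differentiable ℝ y := hy.differentiable (by simp)
  have hξd : Differentiable ℝ ξ := hξ.differentiable (by simp)
  have hy' : ContDiff ℝ ∞ (deriv y) := (contDiff_infty_iff_deriv.mp (hy.of_le (by simp))).2
  have hξ' : ContDiff ℝ ∞ (deriv ξ) := (contDiff_infty_iff_deriv.mp (hξ.of_le (by simp))).2
  have hYc : Continuous y := hy.continuous
  have hΞc : Continuous ξ := hξ.continuous
  have hPc : Continuous (deriv y) := hy'.continuous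
  have hQc : Continuous (deriv ξ) := hξ'.continuous
  -- rewrite the integrand
  have key : ∀ t x, deriv (fun s => y s + t * ξ s) x = deriv y x + t * deriv ξ x := by
    intro t x
    exact ((hyd x).hasDerivAt.add ((hξd x).hasDerivAt.const_mul t)).deriv
  have hfun : (fun t : ℝ => ∫ x in a..b,
        Real.sqrt (1 + (deriv (fun s => y s + t * ξ s) x) ^ 2) * Real.exp (y x + t * ξ x))
      = fun t => ∫ x in a..b, cpsF y ξ (deriv y) (deriv ξ) t x := by
    funext t
    simp only [key, cpsF]
  rw [hfun]
  -- joint continuity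
  have c0 : Continuous fun p : ℝ × ℝ => cpsF y ξ (deriv y) (deriv ξ) p.1 p.2 :=
    (cps_cont_S hPc hQc).mul (cps_cont_exp hYc hΞc)
  have c1 : Continuous fun p : ℝ × ℝ => cpsF1 y ξ (deriv y) (deriv ξ) p.1 p.2 :=
    cps_cont_G1 hYc hΞc hPc hQc
  have c2 : Continuous fun p : ℝ × ℝ => cpsF2 y ξ (deriv y) (deriv ξ) p.1 p.2 :=
    cps_cont_G2 hYc hΞc hPc hQc
  -- first derivative
  have hderivF : deriv (fun t => ∫ x in a..b, cpsF y ξ (deriv y) (deriv ξ) t x)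
      = fun t => ∫ x in a..b, cpsF1 y ξ (deriv y) (deriv ξ) t x :=
    funext fun t => (cps_deriv_integral c0 c1 (cps_hderiv1 y ξ (deriv y) (deriv ξ)) t).deriv
  have h2nd : iteratedDeriv 2
      (fun t => ∫ x in a..b, cpsF y ξ (deriv y) (deriv ξ) t x) 0
      = ∫ x in a..b, cpsF2 y ξ (deriv y) (deriv ξ) 0 x := by
    rw [show (2 : ℕ) = 1 + 1 from rfl, iteratedDeriv_succ, iteratedDeriv_one, hderivF]
    exact (cps_deriv_integral c1 c2 (cps_hderiv2 y ξ (deriv y) (deriv ξ)) 0).deriv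
  rw [h2nd]
  -- integration by parts via the Euler–Lagrange equation
  set w : ℝ → ℝ := fun x => Real.exp (y x) * deriv y x / Real.sqrt (1 + (deriv y x) ^ 2)
    with hw_def
  have hSsm : ContDiff ℝ ∞ (fun x => Real.sqrt (1 + (deriv y x) ^ 2)) :=
    (contDiff_const.add (hy'.pow 2)).sqrt fun x => by positivity
  have hwsm : ContDiff ℝ ∞ w :=
    ((Real.contDiff_exp.comp (hy.of_le (by simp))).mul hy').div hSsm fun x => cps_S_ne _
  have hwd : Differentiable ℝ w := hwsm.differentiable (by norm_num)
  have hwc : Continuous (deriv w) := hwsm.continuous_deriv (by norm_num)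
  have hEL' : ∀ x ∈ Set.Icc a b,
      deriv w x = Real.exp (y x) * Real.sqrt (1 + (deriv y x) ^ 2) := by
    intro x hx
    have h := hEL x hx
    rw [Real.exp_neg] at h
    have he := Real.exp_pos (y x)
    field_simp at h
    linarith
  have hξa : ξ a = 0 := hsupp a (by simp)
  have hξb : ξ b = 0 := hsupp b (by simp)
  -- g = w * ξ²
  have hg : ∀ x, HasDerivAt (fun x => w x * ξ x ^ 2)
      (deriv w x * ξ x ^ 2 + w x * (2 * ξ x ^ 1 * deriv ξ x)) x := by
    intro x
    exact ((hwd x).hasDerivAt).mul ((hξd x).hasDerivAt.pow 2)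
  have hgint : IntervalIntegrable
      (fun x => deriv w x * ξ x ^ 2 + w x * (2 * ξ x ^ 1 * deriv ξ x)) MeasureTheory.volume a b := by
    apply Continuous.intervalIntegrable
    exact (hwc.mul (hΞc.pow 2)).add (hwsm.continuous.mul
      ((continuous_const.mul (hΞc.pow 1)).mul hQc))
  have hparts : ∫ x in a..b, (deriv w x * ξ x ^ 2 + w x * (2 * ξ x ^ 1 * deriv ξ x)) = 0 := by
    rw [intervalIntegral.integral_eq_sub_of_hasDerivAt (fun x _ => hg x) hgint]
    simp [hξa, hξb]
  -- pointwise identity on [a, b]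
  have hpt : ∀ x ∈ Set.uIcc a b,
      cpsF2 y ξ (deriv y) (deriv ξ) 0 x
        = Real.exp (y x) * (deriv ξ x) ^ 2 / Real.sqrt (1 + (deriv y x) ^ 2) ^ 3
          + (deriv w x * ξ x ^ 2 + w x * (2 * ξ x ^ 1 * deriv ξ x)) := by
    intro x hx
    rw [Set.uIcc_of_le hab.le] at hx
    rw [hEL' x hx, hw_def]
    have h0 := cps_S_ne (deriv y x)
    have h2 := cps_sq_sqrt (deriv y x)
    unfold cpsF2
    simp only [zero_mul, add_zero, mul_zero]
    field_simp
    ring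
  have hi1 : IntervalIntegrable
      (fun x => Real.exp (y x) * (deriv ξ x) ^ 2 / Real.sqrt (1 + (deriv y x) ^ 2) ^ 3)
      MeasureTheory.volume a b := by
    apply Continuous.intervalIntegrable
    exact ((Real.continuous_exp.comp hYc).mul (hQc.pow 2)).div
      ((Real.continuous_sqrt.comp (continuous_const.add (hPc.pow 2))).pow 3)
      fun x => pow_ne_zero _ (cps_S_ne _)
  rw [intervalIntegral.integral_congr hpt, intervalIntegral.integral_add hi1 hgint, hparts,
    add_zero]
  apply intervalIntegral.integral_nonneg hab.le
  intro u _
  positivity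
end

section
/- For all smooth compactly supported u on (-π/2, π/2), the inequality ∫_{-π/2}^{π/2} ((3cos²x - 1)/(4 cos x)) u(x)² dx ≤ ∫_{-π/2}^{π/2} u'(x)² cos x dx holds. -/
open intervalIntegral

/-- Smoczyk's stability inequality for the grim reaper: for every
`u ∈ C^∞₀(-π/2, π/2)`,
`∫ (3cos²x - 1)/(4 cos x) · u² dx ≤ ∫ (u')² cos x dx`. -/
theorem smoczyk_inequality (u : ℝ → ℝ) (hu : ContDiff ℝ (⊤ : ℕ∞) u)
    (hcpt : HasCompactSupport u)
    (hsupp : tsupport u ⊆ Set.Ioo (-(Real.pi / 2)) (Real.pi / 2)) :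
    (∫ x in (-(Real.pi / 2))..(Real.pi / 2),
        (3 * Real.cos x ^ 2 - 1) / (4 * Real.cos x) * u x ^ 2)
      ≤ ∫ x in (-(Real.pi / 2))..(Real.pi / 2), (deriv u x) ^ 2 * Real.cos x := by
  have hpi := Real.pi_pos
  have hab : -(Real.pi / 2) ≤ Real.pi / 2 := by linarith
  have hdu : Differentiable ℝ u := hu.differentiable (by simp)
  have hcu : Continuous u := hu.continuous
  have hcdu : Continuous (deriv u) := hu.continuous_deriv (by simp)
  -- u and its derivative vanish outside the support
  have hzero : ∀ x ∉ tsupport u, u x = 0 := fun x hx =>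
    image_eq_zero_of_notMem_tsupport hx
  have hzero' : ∀ x ∉ tsupport u, deriv u x = 0 := by
    intro x hx
    by_contra h
    exact hx (support_deriv_subset (Function.mem_support.mpr h))
  have hcos0 : ∀ x : ℝ, Real.cos x = 0 → x ∉ tsupport u := by
    intro x hx hmem
    have := Real.cos_pos_of_mem_Ioo (hsupp hmem)
    linarith
  -- continuity helper: functions continuous where cos ≠ 0 and vanishing off supp u
  have hC : ∀ f : ℝ → ℝ, (∀ x : ℝ, Real.cos x ≠ 0 → ContinuousAt f x) →
      (∀ x ∉ tsupport u, f x = 0) → Continuous f := by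
    intro f h1 h2
    rw [continuous_iff_continuousAt]
    intro x
    by_cases hc : Real.cos x = 0
    · have hx := hcos0 x hc
      have hop : (tsupport u)ᶜ ∈ nhds x :=
        (isClosed_tsupport u).isOpen_compl.mem_nhds hx
      have hev : f =ᶠ[nhds x] fun _ => (0:ℝ) := by
        filter_upwards [hop] with y hy using h2 y hy
      exact hev.continuousAt
    · exact h1 x hc
  set G : ℝ → ℝ :=
    fun x => Real.cos x * (deriv u x + Real.sin x / (2 * Real.cos x) * u x) ^ 2 with hG
  have hGcont : Continuous G := by
    apply hC
    · intro x hc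
      have h2c : (2 : ℝ) * Real.cos x ≠ 0 := by
        simpa using hc
      exact Real.continuous_cos.continuousAt.mul
        (((hcdu.continuousAt.add
          ((Real.continuous_sin.continuousAt.div
            (continuousAt_const.mul Real.continuous_cos.continuousAt) h2c).mul
            hcu.continuousAt))).pow 2)
    · intro x hx
      simp [hG, hzero x hx, hzero' x hx]
  have hWcont : Continuous
      (fun x => (3 * Real.cos x ^ 2 - 1) / (4 * Real.cos x) * u x ^ 2) := by
    apply hC
    · intro x hc
      have h4c : (4 : ℝ) * Real.cos x ≠ 0 := by simpa using hc
      exact (((continuous_const.mul (Real.continuous_cos.pow 2)).sub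
        continuous_const).continuousAt.div
        (continuousAt_const.mul Real.continuous_cos.continuousAt) h4c).mul
        (hcu.continuousAt.pow 2)
    · intro x hx
      simp [hzero x hx]
  have hI1 : IntervalIntegrable (fun x => deriv u x ^ 2 * Real.cos x)
      MeasureTheory.volume (-(Real.pi / 2)) (Real.pi / 2) :=
    ((hcdu.pow 2).mul Real.continuous_cos).intervalIntegrable _ _
  have hIG : IntervalIntegrable G MeasureTheory.volume (-(Real.pi / 2)) (Real.pi / 2) :=
    hGcont.intervalIntegrable _ _
  have hI3 : IntervalIntegrable
      (fun x => Real.cos x * u x ^ 2 / 2 + Real.sin x * (u x * deriv u x))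
      MeasureTheory.volume (-(Real.pi / 2)) (Real.pi / 2) := by
    apply Continuous.intervalIntegrable
    exact ((Real.continuous_cos.mul (hcu.pow 2)).div_const 2).add
      (Real.continuous_sin.mul (hcu.mul hcdu))
  -- integration by parts : the exact-derivative term integrates to 0
  have hibp : (∫ x in (-(Real.pi / 2))..(Real.pi / 2),
      (Real.cos x * u x ^ 2 / 2 + Real.sin x * (u x * deriv u x))) = 0 := by
    have hF : ∀ x ∈ Set.uIcc (-(Real.pi / 2)) (Real.pi / 2),
        HasDerivAt (fun y => Real.sin y * u y ^ 2 / 2)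
          (Real.cos x * u x ^ 2 / 2 + Real.sin x * (u x * deriv u x)) x := by
      intro x _
      have h1 : HasDerivAt (fun y => u y ^ 2)
          ((2 : ℕ) * u x ^ (2 - 1) * deriv u x) x := (hdu x).hasDerivAt.pow 2
      have h2 := ((Real.hasDerivAt_sin x).mul h1).div_const 2
      refine h2.congr_deriv ?_
      push_cast
      ring
    rw [integral_eq_sub_of_hasDerivAt hF hI3]
    have hua : u (-(Real.pi / 2)) = 0 :=
      hzero _ (fun h => lt_irrefl _ (hsupp h).1)
    have hub : u (Real.pi / 2) = 0 :=
      hzero _ (fun h => lt_irrefl _ (hsupp h).2)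
    simp [hua, hub]
  -- the pointwise identity
  have hEq : Set.EqOn
      (fun x => (3 * Real.cos x ^ 2 - 1) / (4 * Real.cos x) * u x ^ 2)
      (fun x => deriv u x ^ 2 * Real.cos x - G x
        + (Real.cos x * u x ^ 2 / 2 + Real.sin x * (u x * deriv u x)))
      (Set.uIcc (-(Real.pi / 2)) (Real.pi / 2)) := by
    intro x _
    by_cases hc : Real.cos x = 0
    · have h0 := hzero x (hcos0 x hc)
      simp [hG, hc, h0]
    · have hs : Real.sin x ^ 2 = 1 - Real.cos x ^ 2 := by
        nlinarith [Real.sin_sq_add_cos_sq x]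
      simp only [hG]
      field_simp
      linear_combination (4 * u x ^ 2) * Real.sin_sq_add_cos_sq x
  rw [integral_congr hEq, integral_add (hI1.sub hIG) hI3,
    integral_sub hI1 hIG, hibp, add_zero]
  have hGnn : 0 ≤ ∫ x in (-(Real.pi / 2))..(Real.pi / 2), G x := by
    apply integral_nonneg hab
    intro x hx
    exact mul_nonneg (Real.cos_nonneg_of_mem_Icc hx) (sq_nonneg _)
  linarith
end

section
/- Fix ε > 0, let p(x) = ε + cos x and f(x) = (3p(x)² - 1)/(4p(x)²) on J = (-π/2, π/2). If φ is a C¹ function on J satisfying the Riccati equation φ' + φ² - φ(sin x / p) + f = 0, then for every u ∈ C^∞₀(J), ∫_J f u² p dx ≤ ∫_J (u')² p dx. -/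
set_option maxHeartbeats 1000000
open intervalIntegral

lemma integral_shrink {g : ℝ → ℝ} {A a b B : ℝ} (hAa : A ≤ a) (hab : a ≤ b) (hbB : b ≤ B)
    (hg : ContinuousOn g (Set.Icc A B)) (h0 : ∀ x, x ∉ Set.Ioo a b → g x = 0) :
    ∫ x in A..B, g x = ∫ x in a..b, g x := by
  have hAB : A ≤ B := le_trans hAa (le_trans hab hbB)
  have i1 : IntervalIntegrable g MeasureTheory.volume A a :=
    (hg.mono (by rw [Set.uIcc_of_le hAa]; exact Set.Icc_subset_Icc le_rfl (le_trans hab hbB))).intervalIntegrable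
  have i2 : IntervalIntegrable g MeasureTheory.volume a b :=
    (hg.mono (by rw [Set.uIcc_of_le hab]; exact Set.Icc_subset_Icc hAa hbB)).intervalIntegrable
  have i3 : IntervalIntegrable g MeasureTheory.volume b B :=
    (hg.mono (by rw [Set.uIcc_of_le hbB]; exact Set.Icc_subset_Icc (le_trans hAa hab) le_rfl)).intervalIntegrable
  have e1 : ∫ x in A..a, g x = 0 := by
    rw [← intervalIntegral.integral_zero (a := A) (b := a)]
    apply intervalIntegral.integral_congr
    intro x hx
    rw [Set.uIcc_of_le hAa] at hx
    exact h0 x (fun h => absurd h.1 (not_lt.2 hx.2))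
  have e3 : ∫ x in b..B, g x = 0 := by
    rw [← intervalIntegral.integral_zero (a := b) (b := B)]
    apply intervalIntegral.integral_congr
    intro x hx
    rw [Set.uIcc_of_le hbB] at hx
    exact h0 x (fun h => absurd h.2 (not_lt.2 hx.1))
  rw [← intervalIntegral.integral_add_adjacent_intervals i1 (i2.trans i3),
    ← intervalIntegral.integral_add_adjacent_intervals i2 i3, e1, e3]
  ring

/-- Fix `ε > 0`, let `p x = ε + cos x`, `f = (3p² - 1)/(4p²)` on `J = (-π/2, π/2)`.
If `φ` is a `C¹` solution of the Riccati equation `φ' + φ² - φ sin x / p + f = 0` on `J`,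
then for every `u ∈ C^∞₀(J)` we have `∫_J f u² p dx ≤ ∫_J (u')² p dx`. -/
theorem riccati_implies_weighted_inequality (ε : ℝ) (hε : 0 < ε)
    (φ φ' : ℝ → ℝ)
    (hφ : ∀ x ∈ Set.Ioo (-(Real.pi / 2)) (Real.pi / 2), HasDerivAt φ (φ' x) x)
    (hφ' : ContinuousOn φ' (Set.Ioo (-(Real.pi / 2)) (Real.pi / 2)))
    (hric : ∀ x ∈ Set.Ioo (-(Real.pi / 2)) (Real.pi / 2),
      φ' x + (φ x) ^ 2 - φ x * Real.sin x / (ε + Real.cos x) +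
        (3 * (ε + Real.cos x) ^ 2 - 1) / (4 * (ε + Real.cos x) ^ 2) = 0)
    (u : ℝ → ℝ) (hu : ContDiff ℝ (⊤ : ℕ∞) u) (hcpt : HasCompactSupport u)
    (hsupp : tsupport u ⊆ Set.Ioo (-(Real.pi / 2)) (Real.pi / 2)) :
    (∫ x in (-(Real.pi / 2))..(Real.pi / 2),
        (3 * (ε + Real.cos x) ^ 2 - 1) / (4 * (ε + Real.cos x) ^ 2) * u x ^ 2 *
          (ε + Real.cos x))
      ≤ ∫ x in (-(Real.pi / 2))..(Real.pi / 2),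
          (deriv u x) ^ 2 * (ε + Real.cos x) := by
  have hud : Differentiable ℝ u := hu.differentiable (by simp)
  have hcu : Continuous u := hud.continuous
  have hcu' : Continuous (deriv u) := hu.continuous_deriv (by simp)
  rcases (tsupport u).eq_empty_or_nonempty with hK | hK
  · have hu0 : ∀ x, u x = 0 := fun x =>
      image_eq_zero_of_notMem_tsupport (by simp [hK])
    have hueq : u = fun _ => (0:ℝ) := funext hu0
    have h1 : ∀ x, deriv u x = 0 := by intro x; rw [hueq]; simp
    simp [hu0, h1]
  · -- setup
    have hp : ∀ x ∈ Set.Icc (-(Real.pi/2)) (Real.pi/2), 0 < ε + Real.cos x := by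
      intro x hx
      have := Real.cos_nonneg_of_mem_Icc hx
      linarith
    have hKc : IsCompact (tsupport u) := hcpt
    have ha0 : sInf (tsupport u) ∈ tsupport u := hKc.sInf_mem hK
    have hb0 : sSup (tsupport u) ∈ tsupport u := hKc.sSup_mem hK
    obtain ⟨ha0l, ha0r⟩ := hsupp ha0
    obtain ⟨hb0l, hb0r⟩ := hsupp hb0
    set a := (-(Real.pi/2) + sInf (tsupport u))/2 with ha_def
    set b := (sSup (tsupport u) + Real.pi/2)/2 with hb_def
    have haA : -(Real.pi/2) < a := by rw [ha_def]; linarith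
    have haa0 : a < sInf (tsupport u) := by rw [ha_def]; linarith
    have hb0b : sSup (tsupport u) < b := by rw [hb_def]; linarith
    have hbB : b < Real.pi/2 := by rw [hb_def]; linarith
    have hab0 : sInf (tsupport u) ≤ sSup (tsupport u) :=
      le_csSup hKc.bddAbove ha0
    have hab : a < b := lt_of_lt_of_le haa0 (le_trans hab0 (le_of_lt hb0b))
    have hsub : tsupport u ⊆ Set.Ioo a b := by
      intro x hx
      exact ⟨lt_of_lt_of_le haa0 (csInf_le hKc.bddBelow hx),
        lt_of_le_of_lt (le_csSup hKc.bddAbove hx) hb0b⟩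
    have hzero : ∀ x, x ∉ Set.Ioo a b → u x = 0 := fun x hx =>
      image_eq_zero_of_notMem_tsupport (fun h => hx (hsub h))
    have hzero' : ∀ x, x ∉ Set.Ioo a b → deriv u x = 0 := by
      intro x hx
      by_contra h
      exact hx (hsub (support_deriv_subset (show x ∈ Function.support (deriv u) from h)))
    have hIccJ : Set.Icc a b ⊆ Set.Ioo (-(Real.pi/2)) (Real.pi/2) := fun x hx =>
      ⟨lt_of_lt_of_le haA hx.1, lt_of_le_of_lt hx.2 hbB⟩
    have hIccJ' : Set.Icc a b ⊆ Set.Icc (-(Real.pi/2)) (Real.pi/2) :=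
      fun x hx => ⟨le_of_lt (hIccJ hx).1, le_of_lt (hIccJ hx).2⟩
    have hpc : Continuous fun x => ε + Real.cos x := by continuity
    have hφc : ContinuousOn φ (Set.Icc a b) := fun x hx =>
      ((hφ x (hIccJ hx)).continuousAt).continuousWithinAt
    have hφ'c : ContinuousOn φ' (Set.Icc a b) := hφ'.mono hIccJ
    -- F continuous on big Icc
    have hFc : ContinuousOn (fun x => (3 * (ε + Real.cos x) ^ 2 - 1) / (4 * (ε + Real.cos x) ^ 2))
        (Set.Icc (-(Real.pi/2)) (Real.pi/2)) := by
      apply ContinuousOn.div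
      · exact ((continuous_const.mul (hpc.pow 2)).sub continuous_const).continuousOn
      · exact (continuous_const.mul (hpc.pow 2)).continuousOn
      · intro x hx
        have := hp x hx
        positivity
    have hA' : -(Real.pi/2) ≤ a := le_of_lt haA
    have hab' : a ≤ b := le_of_lt hab
    have hB' : b ≤ Real.pi/2 := le_of_lt hbB
    -- shrink both integrals
    have hL : ∫ x in (-(Real.pi/2))..(Real.pi/2),
        (3 * (ε + Real.cos x) ^ 2 - 1) / (4 * (ε + Real.cos x) ^ 2) * u x ^ 2 * (ε + Real.cos x)
        = ∫ x in a..b,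
        (3 * (ε + Real.cos x) ^ 2 - 1) / (4 * (ε + Real.cos x) ^ 2) * u x ^ 2 * (ε + Real.cos x) := by
      apply integral_shrink hA' hab' hB'
      · exact (hFc.mul (hcu.pow 2).continuousOn).mul hpc.continuousOn
      · intro x hx; simp [hzero x hx]
    have hR : ∫ x in (-(Real.pi/2))..(Real.pi/2), (deriv u x) ^ 2 * (ε + Real.cos x)
        = ∫ x in a..b, (deriv u x) ^ 2 * (ε + Real.cos x) := by
      apply integral_shrink hA' hab' hB'
      · exact ((hcu'.pow 2).mul hpc).continuousOn
      · intro x hx; simp [hzero' x hx]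
    rw [hL, hR]
    -- the derivative of W
    set W' : ℝ → ℝ := fun x => 2 * u x * deriv u x * φ x * (ε + Real.cos x)
        + u x ^ 2 * (φ' x * (ε + Real.cos x) - φ x * Real.sin x) with hW'_def
    have hW : ∀ x ∈ Set.uIcc a b,
        HasDerivAt (fun y => u y ^ 2 * φ y * (ε + Real.cos y)) (W' x) x := by
      intro x hx
      rw [Set.uIcc_of_le hab'] at hx
      have hxJ := hIccJ hx
      have h1 : HasDerivAt (fun y => u y ^ 2) ((2:ℕ) * u x ^ 1 * deriv u x) x :=
        (hud x).hasDerivAt.pow 2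
      have h2 : HasDerivAt φ (φ' x) x := hφ x hxJ
      have h3 : HasDerivAt (fun y => ε + Real.cos y) (-Real.sin x) x :=
        (Real.hasDerivAt_cos x).const_add ε
      have := (h1.fun_mul h2).fun_mul h3
      refine this.congr_deriv ?_
      push_cast
      ring
    have hW'c : ContinuousOn W' (Set.Icc a b) := by
      apply ContinuousOn.add
      · exact ((((continuous_const.mul hcu).mul hcu').continuousOn.mul hφc).mul hpc.continuousOn)
      · exact (hcu.pow 2).continuousOn.mul
          ((hφ'c.mul hpc.continuousOn).sub (hφc.mul Real.continuous_sin.continuousOn))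
    have hWint : IntervalIntegrable W' MeasureTheory.volume a b :=
      (hW'c.mono (by rw [Set.uIcc_of_le hab'])).intervalIntegrable
    have hua : u a = 0 := hzero a (by simp)
    have hub : u b = 0 := hzero b (by simp)
    have hWzero : ∫ x in a..b, W' x = 0 := by
      rw [intervalIntegral.integral_eq_sub_of_hasDerivAt hW hWint, hua, hub]
      ring
    -- pointwise identity
    have hpt : ∀ x ∈ Set.uIcc a b,
        (deriv u x) ^ 2 * (ε + Real.cos x)
        = (3 * (ε + Real.cos x) ^ 2 - 1) / (4 * (ε + Real.cos x) ^ 2) * u x ^ 2 * (ε + Real.cos x)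
          + (deriv u x - u x * φ x) ^ 2 * (ε + Real.cos x) + W' x := by
      intro x hx
      rw [Set.uIcc_of_le hab'] at hx
      have hxJ := hIccJ hx
      have hpx : 0 < ε + Real.cos x := hp x (hIccJ' hx)
      have hr := hric x hxJ
      have hFr : (3 * (ε + Real.cos x) ^ 2 - 1) / (4 * (ε + Real.cos x) ^ 2)
          = φ x * Real.sin x / (ε + Real.cos x) - φ' x - φ x ^ 2 := by linarith
      rw [hW'_def, hFr]
      field_simp
      ring
    have huIcc : Set.uIcc a b = Set.Icc a b := Set.uIcc_of_le hab'
    have iF : IntervalIntegrable (fun x =>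
        (3 * (ε + Real.cos x) ^ 2 - 1) / (4 * (ε + Real.cos x) ^ 2) * u x ^ 2 * (ε + Real.cos x))
        MeasureTheory.volume a b := by
      apply ContinuousOn.intervalIntegrable
      rw [huIcc]
      exact ((hFc.mono hIccJ').mul (hcu.pow 2).continuousOn).mul hpc.continuousOn
    have iQ : IntervalIntegrable (fun x => (deriv u x - u x * φ x) ^ 2 * (ε + Real.cos x))
        MeasureTheory.volume a b := by
      apply ContinuousOn.intervalIntegrable
      rw [huIcc]
      exact ((hcu'.continuousOn.sub (hcu.continuousOn.mul hφc)).pow 2).mul hpc.continuousOn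
    have key : ∫ x in a..b, (deriv u x) ^ 2 * (ε + Real.cos x)
        = (∫ x in a..b, (3 * (ε + Real.cos x) ^ 2 - 1) / (4 * (ε + Real.cos x) ^ 2) * u x ^ 2 *
            (ε + Real.cos x))
          + (∫ x in a..b, (deriv u x - u x * φ x) ^ 2 * (ε + Real.cos x))
          + ∫ x in a..b, W' x := by
      rw [intervalIntegral.integral_congr hpt,
        intervalIntegral.integral_add (iF.add iQ) hWint,
        intervalIntegral.integral_add iF iQ]
    have hnn : 0 ≤ ∫ x in a..b, (deriv u x - u x * φ x) ^ 2 * (ε + Real.cos x) :=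
      intervalIntegral.integral_nonneg hab'
        (fun x hx => mul_nonneg (sq_nonneg _) (le_of_lt (hp x (hIccJ' hx))))
    rw [key, hWzero]
    linarith
end

section
/- For u ∈ C^∞₀(-π/2, π/2), if there exists a C¹ function φ on (-π/2, π/2) with φ² + f + φ' - φ sin x/p ≤ 0 where p = ε + cos x and f = (3p²-1)/(4p²), then ∫ (u' - uφ)² p dx ≤ ∫ ((u')² - f u²) p dx, and in particular ∫ f u² p dx ≤ ∫ (u')² p dx. -/
open intervalIntegral

lemma glue_cont {g : ℝ → ℝ} {K U : Set ℝ} (hU : IsOpen U) (hK : IsClosed K)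
    (hKU : K ⊆ U) (hg : ContinuousOn g U) (h0 : ∀ x ∉ K, g x = 0) :
    Continuous g := by
  rw [continuous_iff_continuousAt]
  intro x
  by_cases hx : x ∈ U
  · exact hg.continuousAt (hU.mem_nhds hx)
  · have hx' : x ∈ Kᶜ := fun h => hx (hKU h)
    have hev : g =ᶠ[nhds x] (fun _ => (0:ℝ)) := by
      filter_upwards [hK.isOpen_compl.mem_nhds hx'] with y hy using h0 y hy
    exact continuousAt_const.congr hev.symm

lemma integral_shrink_s18 {h : ℝ → ℝ} (hc : Continuous h) {c a b d : ℝ}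
    (hca : c ≤ a) (hbd : b ≤ d)
    (h0a : ∀ x ≤ a, h x = 0) (h0b : ∀ x, b ≤ x → h x = 0) :
    (∫ x in c..d, h x) = ∫ x in a..b, h x := by
  have i : ∀ s t : ℝ, IntervalIntegrable h MeasureTheory.volume s t :=
    fun s t => hc.intervalIntegrable _ _
  have e1 : (∫ x in c..a, h x) = 0 := by
    rw [intervalIntegral.integral_congr (g := fun _ => (0:ℝ))
      (fun x hx => h0a x (by rw [Set.uIcc_of_le hca] at hx; exact hx.2))]
    simp
  have e2 : (∫ x in b..d, h x) = 0 := by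
    rw [intervalIntegral.integral_congr (g := fun _ => (0:ℝ))
      (fun x hx => h0b x (by rw [Set.uIcc_of_le hbd] at hx; exact hx.1))]
    simp
  have A := intervalIntegral.integral_add_adjacent_intervals (i a b) (i b d)
  have B := intervalIntegral.integral_add_adjacent_intervals (i c a) (i a d)
  rw [← B, ← A, e1, e2]
  ring

/-- For `u ∈ C^∞₀(-π/2, π/2)`: if there exists a `C¹` function `φ` on `J = (-π/2, π/2)`
with `φ² + f + φ' - φ sin x / p ≤ 0`, where `p = ε + cos x` and `f = (3p² - 1)/(4p²)`,
then `∫ (u' - uφ)² p dx ≤ ∫ ((u')² - f u²) p dx`, and in particular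
`∫ f u² p dx ≤ ∫ (u')² p dx`. -/
theorem completing_square_inequality (ε : ℝ) (hε : 0 < ε)
    (u : ℝ → ℝ) (hu : ContDiff ℝ (⊤ : ℕ∞) u) (hcpt : HasCompactSupport u)
    (hsupp : tsupport u ⊆ Set.Ioo (-(Real.pi / 2)) (Real.pi / 2))
    (φ φ' : ℝ → ℝ)
    (hφ : ∀ x ∈ Set.Ioo (-(Real.pi / 2)) (Real.pi / 2), HasDerivAt φ (φ' x) x)
    (hφ' : ContinuousOn φ' (Set.Ioo (-(Real.pi / 2)) (Real.pi / 2)))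
    (hineq : ∀ x ∈ Set.Ioo (-(Real.pi / 2)) (Real.pi / 2),
      (φ x) ^ 2 + (3 * (ε + Real.cos x) ^ 2 - 1) / (4 * (ε + Real.cos x) ^ 2) +
        φ' x - φ x * Real.sin x / (ε + Real.cos x) ≤ 0) :
    ((∫ x in (-(Real.pi / 2))..(Real.pi / 2),
        (deriv u x - u x * φ x) ^ 2 * (ε + Real.cos x))
      ≤ ∫ x in (-(Real.pi / 2))..(Real.pi / 2),
          ((deriv u x) ^ 2 -
            (3 * (ε + Real.cos x) ^ 2 - 1) / (4 * (ε + Real.cos x) ^ 2) * u x ^ 2) *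
            (ε + Real.cos x)) ∧
    (∫ x in (-(Real.pi / 2))..(Real.pi / 2),
        (3 * (ε + Real.cos x) ^ 2 - 1) / (4 * (ε + Real.cos x) ^ 2) * u x ^ 2 *
          (ε + Real.cos x))
      ≤ ∫ x in (-(Real.pi / 2))..(Real.pi / 2),
          (deriv u x) ^ 2 * (ε + Real.cos x) := by
  have pi_pos := Real.pi_pos
  set L : ℝ := -(Real.pi / 2) with hLdef
  set R : ℝ := Real.pi / 2 with hRdef
  have hLR : L < R := by simp only [hLdef, hRdef]; linarith
  set J : Set ℝ := Set.Ioo L R with hJdef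
  have hJopen : IsOpen J := isOpen_Ioo
  -- positivity of the weight on [L, R]
  have hPpos : ∀ x ∈ Set.Icc L R, 0 < ε + Real.cos x := by
    intro x hx
    have : 0 ≤ Real.cos x := Real.cos_nonneg_of_mem_Icc hx
    linarith
  have hPposJ : ∀ x ∈ J, 0 < ε + Real.cos x :=
    fun x hx => hPpos x (Set.Ioo_subset_Icc_self hx)
  -- the enlarged support
  set S : Set ℝ := insert 0 (tsupport u) with hSdef
  have hSne : S.Nonempty := ⟨0, Set.mem_insert _ _⟩
  have hScpt : IsCompact S := hcpt.insert 0
  have h0J : (0:ℝ) ∈ J := by constructor <;> [simp only [hLdef]; simp only [hRdef]] <;> linarith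
  have hSJ : S ⊆ J := by
    intro x hx
    rcases hx with rfl | hx
    · exact h0J
    · exact hsupp hx
  have mI : sInf S ∈ S := hScpt.sInf_mem hSne
  have mS : sSup S ∈ S := hScpt.sSup_mem hSne
  set a : ℝ := (sInf S + L) / 2 with hadef
  set b : ℝ := (sSup S + R) / 2 with hbdef
  have hIJ := hSJ mI
  have hSJ' := hSJ mS
  have hLa : L < a := by rw [hadef]; have := hIJ.1; linarith
  have haI : a < sInf S := by rw [hadef]; have := hIJ.1; linarith
  have hSb : sSup S < b := by rw [hbdef]; have := hSJ'.2; linarith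
  have hbR : b < R := by rw [hbdef]; have := hSJ'.2; linarith
  have hab : a ≤ b := by
    have h1 : sInf S ≤ 0 := csInf_le hScpt.bddBelow (Set.mem_insert _ _)
    have h2 : (0:ℝ) ≤ sSup S := le_csSup hScpt.bddAbove (Set.mem_insert _ _)
    linarith
  have hIccJ : Set.Icc a b ⊆ J := fun x hx => ⟨lt_of_lt_of_le hLa hx.1, lt_of_le_of_lt hx.2 hbR⟩
  -- vanishing of u and deriv u outside (a, b)
  have hu0 : ∀ x, x ∉ tsupport u → u x = 0 := fun x hx => image_eq_zero_of_notMem_tsupport hx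
  have hu0' : ∀ x, x ∉ tsupport u → deriv u x = 0 := by
    intro x hx
    by_contra h
    exact hx (support_deriv_subset (Function.mem_support.mpr h))
  have hnotK_left : ∀ x : ℝ, x ≤ a → x ∉ tsupport u := by
    intro x hx hmem
    have : sInf S ≤ x := csInf_le hScpt.bddBelow (Set.mem_insert_of_mem _ hmem)
    linarith
  have hnotK_right : ∀ x : ℝ, b ≤ x → x ∉ tsupport u := by
    intro x hx hmem
    have : x ≤ sSup S := le_csSup hScpt.bddAbove (Set.mem_insert_of_mem _ hmem)
    linarith
  -- continuity facts
  have hucont : Continuous u := hu.continuous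
  have hud : Continuous (deriv u) := hu.continuous_deriv (by simp)
  have hdiffu : ∀ x : ℝ, HasDerivAt u (deriv u x) x :=
    fun x => (hu.differentiable (by simp) x).hasDerivAt
  have hφc : ContinuousOn φ J := fun x hx => ((hφ x hx).continuousAt).continuousWithinAt
  have hPc : Continuous (fun x : ℝ => ε + Real.cos x) := by fun_prop
  have hg1 : Continuous (fun x => u x * φ x) := by
    apply glue_cont hJopen (isClosed_tsupport u) hsupp
    · exact (hucont.continuousOn).mul hφc
    · intro x hx; rw [hu0 x hx]; ring
  have hg2 : Continuous (fun x =>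
      (3 * (ε + Real.cos x) ^ 2 - 1) / (4 * (ε + Real.cos x) ^ 2) * u x ^ 2) := by
    apply glue_cont hJopen (isClosed_tsupport u) hsupp
    · apply ContinuousOn.mul
      · apply ContinuousOn.div
        · fun_prop
        · fun_prop
        · intro x hx
          have := hPposJ x hx
          positivity
      · fun_prop
    · intro x hx; rw [hu0 x hx]; ring
  have hH1 : Continuous (fun x => (deriv u x - u x * φ x) ^ 2 * (ε + Real.cos x)) := by
    exact ((hud.sub hg1).pow 2).mul hPc
  have hH2 : Continuous (fun x => ((deriv u x) ^ 2 -
      (3 * (ε + Real.cos x) ^ 2 - 1) / (4 * (ε + Real.cos x) ^ 2) * u x ^ 2) *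
      (ε + Real.cos x)) := ((hud.pow 2).sub hg2).mul hPc
  have hH3 : Continuous (fun x =>
      (3 * (ε + Real.cos x) ^ 2 - 1) / (4 * (ε + Real.cos x) ^ 2) * u x ^ 2 *
      (ε + Real.cos x)) := hg2.mul hPc
  have hH4 : Continuous (fun x => (deriv u x) ^ 2 * (ε + Real.cos x)) := (hud.pow 2).mul hPc
  -- FTC for the boundary term
  set G : ℝ → ℝ := fun x => u x ^ 2 * (φ x * (ε + Real.cos x)) with hGdef
  set G' : ℝ → ℝ := fun x => 2 * u x * deriv u x * (φ x * (ε + Real.cos x)) +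
      u x ^ 2 * (φ' x * (ε + Real.cos x) + φ x * (-Real.sin x)) with hG'def
  have hG : ∀ x ∈ Set.uIcc a b, HasDerivAt G (G' x) x := by
    intro x hx
    rw [Set.uIcc_of_le hab] at hx
    have hxJ := hIccJ hx
    have h1 : HasDerivAt (fun y => u y ^ 2) (2 * u x * deriv u x) x := by
      have := (hdiffu x).fun_pow 2
      simpa [mul_comm, mul_assoc, mul_left_comm] using this
    have h2 : HasDerivAt (fun y => φ y * (ε + Real.cos y))
        (φ' x * (ε + Real.cos x) + φ x * (-Real.sin x)) x := by
      have hp : HasDerivAt (fun y => ε + Real.cos y) (-Real.sin x) x := by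
        simpa using (Real.hasDerivAt_cos x).const_add ε
      exact (hφ x hxJ).mul hp
    exact h1.mul h2
  have hG'cJ : ContinuousOn G' J := by
    apply ContinuousOn.add
    · exact (((continuous_const.mul hucont).mul hud).continuousOn).mul
        (hφc.mul hPc.continuousOn)
    · exact ((hucont.pow 2).continuousOn).mul
        ((hφ'.mul hPc.continuousOn).add (hφc.mul (by fun_prop : Continuous fun x => -Real.sin x).continuousOn))
  have hG'int : IntervalIntegrable G' MeasureTheory.volume a b :=
    (hG'cJ.mono (by rw [Set.uIcc_of_le hab]; exact hIccJ)).intervalIntegrable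
  have hFTC : (∫ x in a..b, G' x) = 0 := by
    rw [intervalIntegral.integral_eq_sub_of_hasDerivAt hG hG'int]
    have ua : u a = 0 := hu0 a (hnotK_left a le_rfl)
    have ub : u b = 0 := hu0 b (hnotK_right b le_rfl)
    simp [hGdef, ua, ub]
  -- the completing-the-square pointwise identity
  have key : ∀ x ∈ Set.uIcc a b,
      (deriv u x - u x * φ x) ^ 2 * (ε + Real.cos x) =
      (((deriv u x) ^ 2 -
          (3 * (ε + Real.cos x) ^ 2 - 1) / (4 * (ε + Real.cos x) ^ 2) * u x ^ 2) *
          (ε + Real.cos x)) +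
      ((u x ^ 2 * (ε + Real.cos x)) *
        ((φ x) ^ 2 + (3 * (ε + Real.cos x) ^ 2 - 1) / (4 * (ε + Real.cos x) ^ 2) +
          φ' x - φ x * Real.sin x / (ε + Real.cos x))) - G' x := by
    intro x hx
    rw [Set.uIcc_of_le hab] at hx
    have hp : (ε + Real.cos x) ≠ 0 := (hPposJ x (hIccJ hx)).ne'
    simp only [hG'def]
    field_simp
    ring
  -- integrability of the pieces on [a, b]
  have hQc : ContinuousOn (fun x => (u x ^ 2 * (ε + Real.cos x)) *
      ((φ x) ^ 2 + (3 * (ε + Real.cos x) ^ 2 - 1) / (4 * (ε + Real.cos x) ^ 2) +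
        φ' x - φ x * Real.sin x / (ε + Real.cos x))) J := by
    apply ContinuousOn.mul
    · fun_prop
    · apply ContinuousOn.sub
      · apply ContinuousOn.add
        · apply ContinuousOn.add
          · exact hφc.pow 2
          · apply ContinuousOn.div
            · fun_prop
            · fun_prop
            · intro x hx; have := hPposJ x hx; positivity
        · exact hφ'
      · apply ContinuousOn.div
        · exact hφc.mul Real.continuous_sin.continuousOn
        · fun_prop
        · intro x hx; exact (hPposJ x hx).ne'
  have hQint : IntervalIntegrable (fun x => (u x ^ 2 * (ε + Real.cos x)) *
      ((φ x) ^ 2 + (3 * (ε + Real.cos x) ^ 2 - 1) / (4 * (ε + Real.cos x) ^ 2) +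
        φ' x - φ x * Real.sin x / (ε + Real.cos x))) MeasureTheory.volume a b :=
    (hQc.mono (by rw [Set.uIcc_of_le hab]; exact hIccJ)).intervalIntegrable
  have hH2int : IntervalIntegrable (fun x => ((deriv u x) ^ 2 -
      (3 * (ε + Real.cos x) ^ 2 - 1) / (4 * (ε + Real.cos x) ^ 2) * u x ^ 2) *
      (ε + Real.cos x)) MeasureTheory.volume a b := hH2.intervalIntegrable _ _
  -- main computation over [a, b]
  have hQle : (∫ x in a..b, (u x ^ 2 * (ε + Real.cos x)) *
      ((φ x) ^ 2 + (3 * (ε + Real.cos x) ^ 2 - 1) / (4 * (ε + Real.cos x) ^ 2) +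
        φ' x - φ x * Real.sin x / (ε + Real.cos x))) ≤ 0 := by
    have h0 : (∫ x in a..b, (0:ℝ)) = 0 := by simp
    rw [← h0]
    apply intervalIntegral.integral_mono_on hab hQint
      (continuous_const.intervalIntegrable _ _)
    intro x hx
    have hxJ := hIccJ hx
    exact mul_nonpos_of_nonneg_of_nonpos
      (mul_nonneg (sq_nonneg _) (hPposJ x hxJ).le) (hineq x hxJ)
  have habmain : (∫ x in a..b, (deriv u x - u x * φ x) ^ 2 * (ε + Real.cos x))
      ≤ ∫ x in a..b, ((deriv u x) ^ 2 -
          (3 * (ε + Real.cos x) ^ 2 - 1) / (4 * (ε + Real.cos x) ^ 2) * u x ^ 2) *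
          (ε + Real.cos x) := by
    rw [intervalIntegral.integral_congr key]
    rw [intervalIntegral.integral_sub (hH2int.add hQint) hG'int,
        intervalIntegral.integral_add hH2int hQint, hFTC]
    linarith
  -- shrink the integrals from [L, R] to [a, b]
  have hLa' : L ≤ a := hLa.le
  have hbR' : b ≤ R := hbR.le
  have hvan : ∀ x : ℝ, (x ≤ a ∨ b ≤ x) → u x = 0 ∧ deriv u x = 0 := by
    intro x hx
    have hk : x ∉ tsupport u := by
      rcases hx with hx | hx
      · exact hnotK_left x hx
      · exact hnotK_right x hx
    exact ⟨hu0 x hk, hu0' x hk⟩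
  have sh1 : (∫ x in L..R, (deriv u x - u x * φ x) ^ 2 * (ε + Real.cos x))
      = ∫ x in a..b, (deriv u x - u x * φ x) ^ 2 * (ε + Real.cos x) := by
    apply integral_shrink_s18 hH1 hLa' hbR'
    · intro x hx; obtain ⟨h1, h2⟩ := hvan x (Or.inl hx); rw [h1, h2]; ring
    · intro x hx; obtain ⟨h1, h2⟩ := hvan x (Or.inr hx); rw [h1, h2]; ring
  have sh2 : (∫ x in L..R, ((deriv u x) ^ 2 -
        (3 * (ε + Real.cos x) ^ 2 - 1) / (4 * (ε + Real.cos x) ^ 2) * u x ^ 2) *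
        (ε + Real.cos x))
      = ∫ x in a..b, ((deriv u x) ^ 2 -
        (3 * (ε + Real.cos x) ^ 2 - 1) / (4 * (ε + Real.cos x) ^ 2) * u x ^ 2) *
        (ε + Real.cos x) := by
    apply integral_shrink_s18 hH2 hLa' hbR'
    · intro x hx; obtain ⟨h1, h2⟩ := hvan x (Or.inl hx); rw [h1, h2]; ring
    · intro x hx; obtain ⟨h1, h2⟩ := hvan x (Or.inr hx); rw [h1, h2]; ring
  have part1 : (∫ x in L..R, (deriv u x - u x * φ x) ^ 2 * (ε + Real.cos x))
      ≤ ∫ x in L..R, ((deriv u x) ^ 2 -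
          (3 * (ε + Real.cos x) ^ 2 - 1) / (4 * (ε + Real.cos x) ^ 2) * u x ^ 2) *
          (ε + Real.cos x) := by
    rw [sh1, sh2]; exact habmain
  refine ⟨part1, ?_⟩
  -- second conclusion
  have hpos1 : 0 ≤ ∫ x in L..R, (deriv u x - u x * φ x) ^ 2 * (ε + Real.cos x) := by
    apply intervalIntegral.integral_nonneg hLR.le
    intro x hx
    exact mul_nonneg (sq_nonneg _) (hPpos x hx).le
  have hsplit : (∫ x in L..R, ((deriv u x) ^ 2 -
        (3 * (ε + Real.cos x) ^ 2 - 1) / (4 * (ε + Real.cos x) ^ 2) * u x ^ 2) *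
        (ε + Real.cos x))
      = (∫ x in L..R, (deriv u x) ^ 2 * (ε + Real.cos x))
        - ∫ x in L..R, (3 * (ε + Real.cos x) ^ 2 - 1) / (4 * (ε + Real.cos x) ^ 2) *
            u x ^ 2 * (ε + Real.cos x) := by
    rw [← intervalIntegral.integral_sub (hH4.intervalIntegrable _ _)
        (hH3.intervalIntegrable _ _)]
    apply intervalIntegral.integral_congr
    intro x _
    ring
  have := le_trans hpos1 part1
  linarith [hsplit ▸ this]
end
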